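/- arXiv:2505.04599 — 4 statements merged into one kernel-verified Lean document; each statement's English description precedes it below -/
import Mathlib

section
/- For any γ > 0, ε > 0, σ > 0, and t ≥ 1, the sum S2 = Σ_{i=0}^{t-1} 1/(γ² + i(ε² + σ²)) satisfies S2 ≥ (1/(ε² + σ²))·log(1 + t·σ²/γ²). -/
theorem stmt_6 (γ ε σ : ℝ) (hγ : 0 < γ) (hε : 0 < ε) (hσ : 0 < σ)
    (t : ℕ) (ht : 1 ≤ t) :
    (1 / (ε ^ 2 + σ ^ 2)) * Real.log (1 + t * σ ^ 2 / γ ^ 2) ≤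
      ∑ i ∈ Finset.range t, 1 / (γ ^ 2 + i * (ε ^ 2 + σ ^ 2)) := by
  set c := ε ^ 2 + σ ^ 2 with hcdef
  have hc : 0 < c := by positivity
  have hγ2 : 0 < γ ^ 2 := by positivity
  have key : ∀ i : ℕ,
      Real.log (γ ^ 2 + ((i : ℝ) + 1) * c) - Real.log (γ ^ 2 + (i : ℝ) * c)
        ≤ c / (γ ^ 2 + (i : ℝ) * c) := by
    intro i
    have hpos : 0 < γ ^ 2 + (i : ℝ) * c := by positivity
    have hpos2 : 0 < γ ^ 2 + ((i : ℝ) + 1) * c := by positivity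
    rw [← Real.log_div (ne_of_gt hpos2) (ne_of_gt hpos)]
    calc Real.log ((γ ^ 2 + ((i : ℝ) + 1) * c) / (γ ^ 2 + (i : ℝ) * c))
        ≤ (γ ^ 2 + ((i : ℝ) + 1) * c) / (γ ^ 2 + (i : ℝ) * c) - 1 :=
          Real.log_le_sub_one_of_pos (div_pos hpos2 hpos)
      _ = c / (γ ^ 2 + (i : ℝ) * c) := by field_simp; ring
  have tele : ∑ i ∈ Finset.range t,
      (Real.log (γ ^ 2 + ((i : ℝ) + 1) * c) - Real.log (γ ^ 2 + (i : ℝ) * c))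
        = Real.log (γ ^ 2 + (t : ℝ) * c) - Real.log (γ ^ 2) := by
    have := Finset.sum_range_sub (fun i : ℕ => Real.log (γ ^ 2 + (i : ℝ) * c)) t
    simpa [Nat.cast_add, Nat.cast_one] using this
  rw [one_div, inv_mul_eq_div, div_le_iff₀ hc]
  have hσ2 : σ ^ 2 ≤ c := by nlinarith
  calc Real.log (1 + (t : ℝ) * σ ^ 2 / γ ^ 2)
      ≤ Real.log (1 + (t : ℝ) * c / γ ^ 2) := by
        apply Real.log_le_log (by positivity)
        gcongr
    _ = Real.log (γ ^ 2 + (t : ℝ) * c) - Real.log (γ ^ 2) := by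
        rw [← Real.log_div (by positivity) (ne_of_gt hγ2)]
        congr 1
        field_simp
    _ = ∑ i ∈ Finset.range t,
          (Real.log (γ ^ 2 + ((i : ℝ) + 1) * c) - Real.log (γ ^ 2 + (i : ℝ) * c)) :=
        tele.symm
    _ ≤ ∑ i ∈ Finset.range t, c / (γ ^ 2 + (i : ℝ) * c) :=
        Finset.sum_le_sum fun i _ => key i
    _ = (∑ i ∈ Finset.range t, 1 / (γ ^ 2 + (i : ℝ) * c)) * c := by
        rw [Finset.sum_mul]
        exact Finset.sum_congr rfl fun i _ => by rw [one_div_mul_eq_div]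
end

section
/- Let p ∈ (0,1) and for λ > (1-p)/p let r(λ) be the unique root of h_λ(x) = p·x^{λ+1} - x + (1-p) in (0,1). Then r(λ) is strictly decreasing in λ. -/
/-!
Write `h_λ(x) = p x^(λ+1) - x + (1 - p)`. For `x ∈ (0,1)` the power `x^(λ+1)` decreases in `λ`,
so if `a < b` then `h_b(r a) < h_a(r a) = 0`. Since `h_b` is convex and vanishes at `1`, it stays
negative on `[r a, 1)`; as `h_b(r b) = 0`, the root `r b` must lie to the left of `r a`.
-/

open Set

noncomputable def rootFn (p lam x : ℝ) : ℝ := p * x ^ (lam + 1) - x + (1 - p)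

section

variable {p lam : ℝ}

theorem rootFn_one : rootFn p lam 1 = 0 := by
  simp [rootFn]

theorem rootFn_lt_rootFn_of_lt {a b x : ℝ} (hp : 0 < p) (hx₀ : 0 < x) (hx₁ : x < 1)
    (hab : a < b) : rootFn p b x < rootFn p a x := by
  have hpow : x ^ (b + 1) < x ^ (a + 1) :=
    Real.rpow_lt_rpow_of_exponent_gt hx₀ hx₁ (by linarith)
  unfold rootFn
  gcongr

theorem convexOn_rootFn (hp : 0 ≤ p) (hlam : 0 ≤ lam) : ConvexOn ℝ (Ici 0) (rootFn p lam) :=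
  (((convexOn_rpow (by linarith : (1 : ℝ) ≤ lam + 1)).smul hp).sub
    (concaveOn_id (convex_Ici 0))).add_const (1 - p)

theorem rootFn_neg_of_mem_Ico {x y : ℝ} (hp : 0 ≤ p) (hlam : 0 ≤ lam) (hx : 0 ≤ x)
    (hfx : rootFn p lam x < 0) (hy : y ∈ Ico x 1) : rootFn p lam y < 0 := by
  obtain rfl | hxy := hy.1.eq_or_lt
  · exact hfx
  by_contra! hfy
  have hseg : y ∈ openSegment ℝ x 1 := by
    rw [openSegment_eq_Ioo (hxy.trans hy.2)]
    exact ⟨hxy, hy.2⟩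
  have hlt := (convexOn_rootFn hp hlam).lt_right_of_left_lt hx (mem_Ici.2 zero_le_one) hseg
    (hfx.trans_le hfy)
  rw [rootFn_one] at hlt
  linarith

end

theorem stmt_15 (p : ℝ) (hp : p ∈ Set.Ioo (0 : ℝ) 1)
    (r : ℝ → ℝ)
    (hr : ∀ lam : ℝ, (1 - p) / p < lam →
      r lam ∈ Set.Ioo (0 : ℝ) 1 ∧ p * (r lam) ^ (lam + 1) - r lam + (1 - p) = 0) :
    StrictAntiOn r (Set.Ioi ((1 - p) / p)) := by
  intro a ha b hb hab
  obtain ⟨⟨hxa₀, hxa₁⟩, hxa⟩ := hr a ha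
  obtain ⟨⟨-, hxb₁⟩, hxb⟩ := hr b hb
  have hb₀ : 0 ≤ b := (div_nonneg (by linarith [hp.2]) hp.1.le).trans (le_of_lt hb)
  have hneg : rootFn p b (r a) < 0 :=
    (rootFn_lt_rootFn_of_lt hp.1 hxa₀ hxa₁ hab).trans_eq hxa
  by_contra! hle
  exact (rootFn_neg_of_mem_Ico hp.1.le hb₀ hxa₀.le hneg ⟨hle, hxb₁⟩).ne hxb
end

section
/- Let p ∈ (0,1) and r(λ) be the unique root of h_λ(x) = p·x^{λ+1} - x + (1-p) in (0,1). Then lim_{λ→((1-p)/p)⁺} r(λ) = 1. -/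
/-!
Write `h_λ(x) = p x^(λ+1) - x + (1 - p)` and `ℓ = (1 - p) / p`. For `λ ≥ 0` the function `h_λ` is
convex on `[0, ∞)` and vanishes at `1`, so if `h_λ(r) = 0` with `r ≤ y ≤ 1` then `h_λ(y) ≤ 0`.
On the other hand, for a fixed `y ∈ [0, 1)` Bernoulli's inequality gives `h_ℓ(y) > 0`, and
`h_λ(y)` is continuous in `λ`, so `h_λ(y) > 0` for `λ` close to `ℓ`. Hence `y < r(λ) < 1`
eventually as `λ → ℓ⁺`.
-/

open Set Filter Topology

noncomputable def rootFun (p lam x : ℝ) : ℝ := p * x ^ (lam + 1) - x + (1 - p)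

@[simp]
lemma rootFun_one (p lam : ℝ) : rootFun p lam 1 = 0 := by
  simp [rootFun]

lemma convexOn_rootFun {p lam : ℝ} (hp : 0 ≤ p) (hlam : 0 ≤ lam) :
    ConvexOn ℝ (Ici 0) (rootFun p lam) :=
  (((convexOn_rpow (by linarith)).smul hp).sub (concaveOn_id (convex_Ici 0))).add_const _

lemma rootFun_nonpos_of_rootFun_eq_zero {p lam x y : ℝ} (hp : 0 ≤ p) (hlam : 0 ≤ lam)
    (hx : 0 ≤ x) (hxy : x ≤ y) (hy : y ≤ 1) (hroot : rootFun p lam x = 0) :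
    rootFun p lam y ≤ 0 := by
  have := (convexOn_rootFun hp hlam).le_on_segment (mem_Ici.2 hx) (mem_Ici.2 zero_le_one)
    (by rw [segment_eq_Icc (hxy.trans hy)]; exact ⟨hxy, hy⟩)
  simpa [hroot] using this

/-- Bernoulli's inequality for the exponent `(1 - p) / p + 1 = 1 / p > 1`. -/
lemma rootFun_critical_pos {p x : ℝ} (hp : p ∈ Ioo 0 1) (hx0 : 0 ≤ x) (hx1 : x < 1) :
    0 < rootFun p ((1 - p) / p) x := by
  obtain ⟨hp0, hp1⟩ := hp
  have hexp : (1 - p) / p + 1 = 1 / p := by field_simp; ring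
  have hbern := one_add_mul_self_lt_rpow_one_add (s := x - 1) (by linarith) (by linarith)
    (show 1 < 1 / p by rw [lt_div_iff₀ hp0]; linarith)
  rw [add_sub_cancel, one_div_mul_eq_div] at hbern
  rw [rootFun, hexp]
  nlinarith [mul_lt_mul_of_pos_left hbern hp0, mul_div_cancel₀ (x - 1) hp0.ne']

lemma continuousAt_rootFun_exponent (p x : ℝ) {lam : ℝ} (hlam : lam + 1 ≠ 0) :
    ContinuousAt (fun lam => rootFun p lam x) lam := by
  have hpow : ContinuousAt (fun lam : ℝ => x ^ (lam + 1)) lam :=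
    (Real.continuousAt_const_rpow' hlam).comp (f := fun lam : ℝ => lam + 1)
      (continuousAt_id.add continuousAt_const)
  exact ((continuousAt_const.mul hpow).sub continuousAt_const).add continuousAt_const

theorem stmt_17 (p : ℝ) (hp : p ∈ Set.Ioo (0 : ℝ) 1)
    (r : ℝ → ℝ)
    (hr : ∀ lam : ℝ, (1 - p) / p < lam →
      r lam ∈ Set.Ioo (0 : ℝ) 1 ∧ p * (r lam) ^ (lam + 1) - r lam + (1 - p) = 0) :
    Filter.Tendsto r (nhdsWithin ((1 - p) / p) (Set.Ioi ((1 - p) / p))) (nhds 1) := by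
  have hcrit : 0 < (1 - p) / p := div_pos (by linarith [hp.2]) hp.1
  have hlower : ∀ y ∈ Ico (0 : ℝ) 1, ∀ᶠ lam in 𝓝[>] ((1 - p) / p), y < r lam := by
    intro y ⟨hy0, hy1⟩
    have hpos : ∀ᶠ lam in 𝓝[>] ((1 - p) / p), 0 < rootFun p lam y :=
      (continuousAt_const.eventually_lt
        (continuousAt_rootFun_exponent p y (lam := (1 - p) / p) (by linarith))
        (rootFun_critical_pos hp hy0 hy1)).filter_mono nhdsWithin_le_nhds
    filter_upwards [hpos, self_mem_nhdsWithin] with lam hlam hgt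
    obtain ⟨⟨hr0, -⟩, hroot⟩ := hr lam hgt
    by_contra! hle
    exact (rootFun_nonpos_of_rootFun_eq_zero hp.1.le (by linarith [mem_Ioi.1 hgt]) hr0.le hle
      hy1.le hroot).not_gt hlam
  refine tendsto_order.2 ⟨fun a ha => ?_, fun b hb => ?_⟩
  · filter_upwards [hlower (max a 0) ⟨le_max_right _ _, max_lt ha one_pos⟩] with lam hlam
    exact (le_max_left _ _).trans_lt hlam
  · filter_upwards [self_mem_nhdsWithin] with lam hlam
    exact (hr lam hlam).1.2.trans hb
end

section
/- Let Δ, L0, L1 > 0 with Δ·L1² ≥ L0, and let f: ℝ → ℝ be any continuously differentiable function that is bounded below with f(0) - inf f ≤ Δ and satisfies the (L0,L1)-smoothness condition |f'(x) - f'(y)| ≤ (L0 + L1|f'(x)|)·|x - y| for all |x - y| ≤ 1/L1. Then for every x with f(x) ≤ f(0), |f'(x)| ≤ C·(L0/L1 + Δ·L1) for some universal constant C. -/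
/-! Step from `x` a distance `h = 1 / (2 L₁)` against the sign of `g = f'(x)`. Along that step `f'`
stays within `(L₀ + L₁ |g|) h` of `g`, so `f` decreases by at least `(|g| - (L₀ + L₁ |g|) h) h`.
Since `f x ≤ f 0`, no value of `f` lies more than `Δ` below `f x`, and solving for `|g|` gives
`|g| ≤ L₀ / L₁ + 4 Δ L₁`. -/

open Set

theorem exists_mul_le_sub_of_abs_deriv_sub_le {f : ℝ → ℝ} (hf : Differentiable ℝ f) {x h r : ℝ}
    (hh : 0 ≤ h) (hr : ∀ c, |x - c| ≤ h → |deriv f x - deriv f c| ≤ r) :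
    ∃ y, (|deriv f x| - r) * h ≤ f x - f y := by
  have hr' : ∀ c ∈ Ioo (x - h) (x + h), |deriv f x - deriv f c| ≤ r := fun c hc ↦
    hr c (abs_le.2 ⟨by linarith [hc.2], by linarith [hc.1]⟩)
  rcases le_or_gt 0 (deriv f x) with hpos | hneg
  · refine ⟨x - h, ?_⟩
    have hge : ∀ c ∈ interior (Icc (x - h) x), deriv f x - r ≤ deriv f c := by
      rw [interior_Icc]
      intro c hc
      linarith [le_abs_self (deriv f x - deriv f c), hr' c ⟨hc.1, by linarith [hc.2]⟩]
    have := (convex_Icc (x - h) x).mul_sub_le_image_sub_of_le_deriv hf.continuous.continuousOn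
      hf.differentiableOn hge (x - h) ⟨le_rfl, by linarith⟩ x ⟨by linarith, le_rfl⟩ (by linarith)
    rw [abs_of_nonneg hpos]
    linarith
  · refine ⟨x + h, ?_⟩
    have hle : ∀ c ∈ interior (Icc x (x + h)), deriv f c ≤ deriv f x + r := by
      rw [interior_Icc]
      intro c hc
      linarith [neg_abs_le (deriv f x - deriv f c), hr' c ⟨by linarith [hc.1], hc.2⟩]
    have := (convex_Icc x (x + h)).image_sub_le_mul_sub_of_deriv_le hf.continuous.continuousOn
      hf.differentiableOn hle x ⟨le_rfl, by linarith⟩ (x + h) ⟨by linarith, le_rfl⟩ (by linarith)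
    rw [abs_of_neg hneg]
    linarith

theorem abs_deriv_le_of_relaxed_smooth {f : ℝ → ℝ} (hf : Differentiable ℝ f) {L0 L1 Δ x : ℝ}
    (hL0 : 0 ≤ L0) (hL1 : 0 < L1)
    (hsmooth : ∀ y, |x - y| ≤ 1 / (2 * L1) →
      |deriv f x - deriv f y| ≤ (L0 + L1 * |deriv f x|) * |x - y|)
    (hgap : ∀ y, f x - f y ≤ Δ) :
    |deriv f x| ≤ L0 / L1 + 4 * Δ * L1 := by
  set g := |deriv f x|
  have hscale : 0 ≤ L0 + L1 * g := by positivity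
  obtain ⟨y, hy⟩ := exists_mul_le_sub_of_abs_deriv_sub_le hf (by positivity : 0 ≤ 1 / (2 * L1))
    fun c hc ↦ (hsmooth c hc).trans (mul_le_mul_of_nonneg_left hc hscale)
  have hdecrease : (g - (L0 + L1 * g) * (1 / (2 * L1))) * (1 / (2 * L1)) ≤ Δ :=
    hy.trans (hgap y)
  have key : L1 * g ≤ L0 + 4 * Δ * L1 ^ 2 := by
    field_simp at hdecrease
    nlinarith
  rw [div_add' _ _ _ hL1.ne', le_div_iff₀ hL1]
  nlinarith

theorem stmt_19 :
    ∃ C : ℝ, 0 < C ∧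
      ∀ (Δ L0 L1 : ℝ) (f : ℝ → ℝ),
        0 < Δ → 0 < L0 → 0 < L1 → L0 ≤ Δ * L1 ^ 2 →
        ContDiff ℝ 1 f →
        BddBelow (Set.range f) →
        f 0 - ⨅ x, f x ≤ Δ →
        (∀ x y : ℝ, |x - y| ≤ 1 / L1 →
          |deriv f x - deriv f y| ≤ (L0 + L1 * |deriv f x|) * |x - y|) →
        ∀ x : ℝ, f x ≤ f 0 → |deriv f x| ≤ C * (L0 / L1 + Δ * L1) := by
  refine ⟨4, by norm_num, fun Δ L0 L1 f _ hL0 hL1 _ hf hbdd hgap hsmooth x hx ↦ ?_⟩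
  have hradius : 1 / (2 * L1) ≤ 1 / L1 :=
    one_div_le_one_div_of_le hL1 (by linarith)
  have hbound := abs_deriv_le_of_relaxed_smooth (Δ := Δ) (hf.differentiable one_ne_zero) hL0.le hL1
    (fun y hy ↦ hsmooth x y (hy.trans hradius))
    (fun y ↦ by linarith [ciInf_le hbdd y])
  have : 0 ≤ L0 / L1 := by positivity
  linarith
end
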